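/- Let F be a field of characteristic different from 2, N ≥ 1, and let y ∈ Sp_N(F) be a monomial matrix (exactly one nonzero entry in each row and each column) with y² = I_{2N}. Let w = τ𝔠 be the signed permutation of [1,N] induced by y, i.e., for i ∈ [1,N], y maps the line F·e_i into F·e_{τ(i)} if i ∉ 𝔠 and into F·e_{2N+1−τ(i)} if i ∈ 𝔠. Then w is an involution and τ(i) ≠ i for every i ∈ 𝔠. -/

import Mathlib

open scoped MatrixGroups Matrix

namespace Stmt8

variable (F : Type*) [Field F]

/-- Extension of a tuple `n : Fin k → ℕ` by zero to all of `ℕ`. -/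
def nExt {k : ℕ} (n : Fin k → ℕ) : ℕ → ℕ := fun i => if h : i < k then n ⟨i, h⟩ else 0

/-- Partial sums `ν_j = n 0 + ⋯ + n (j-1)`. -/
def psum {k : ℕ} (n : Fin k → ℕ) (j : ℕ) : ℕ := ∑ i ∈ Finset.range j, nExt n i

/-- Block index of a position `x` with respect to the composition `c` with `K` parts. -/
def blkIdxF (c : ℕ → ℕ) (K : ℕ) (x : ℕ) : ℕ :=
  ((Finset.range K).filter (fun j => (∑ i ∈ Finset.range (j + 1), c i) ≤ x)).card

/-- The symplectic form `J_N = [[0, w_N], [-w_N, 0]]`, `w_N` the antidiagonal matrix. -/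
def Jmat (N : ℕ) : Matrix (Fin (2 * N)) (Fin (2 * N)) F :=
  fun i j => if (i : ℕ) + (j : ℕ) = 2 * N - 1 then (if (i : ℕ) < N then 1 else -1) else 0

/-- The symplectic group `Sp_N(F) = { g ∈ GL_{2N}(F) : ᵗg J_N g = J_N }` (as a set). -/
def SpSet (N : ℕ) : Set (GL (Fin (2 * N)) F) :=
  { g | (g.val)ᵀ * Jmat F N * g.val = Jmat F N }

/-- The composition `(n_1, …, n_k, 2r, n_k, …, n_1)` of `2N` underlying the standard
parabolic subgroup of `Sp_N` attached to `(n_1, …, n_k; r)`. -/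
def cSp {k : ℕ} (n : Fin k → ℕ) (r : ℕ) : ℕ → ℕ :=
  fun i => if i < k then nExt n i else if i = k then 2 * r else nExt n (2 * k - i)

/-- The standard parabolic subgroup `P_{(n_1,…,n_k;r)}` of `Sp_N` (as a set): block upper
triangular symplectic matrices with diagonal blocks `n_1, …, n_k, 2r, n_k, …, n_1`. -/
def PparSp (N : ℕ) {k : ℕ} (n : Fin k → ℕ) (r : ℕ) : Set (GL (Fin (2 * N)) F) :=
  { g | g ∈ SpSet F N ∧ ∀ i j : Fin (2 * N),
      blkIdxF (cSp n r) (2 * k + 1) (j : ℕ) < blkIdxF (cSp n r) (2 * k + 1) (i : ℕ) →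
        g.val i j = 0 }

/-- The standard Levi subgroup `M_{(n_1,…,n_k;r)}` of `Sp_N` (as a set). -/
def MparSp (N : ℕ) {k : ℕ} (n : Fin k → ℕ) (r : ℕ) : Set (GL (Fin (2 * N)) F) :=
  { g | g ∈ SpSet F N ∧ ∀ i j : Fin (2 * N),
      blkIdxF (cSp n r) (2 * k + 1) (j : ℕ) ≠ blkIdxF (cSp n r) (2 * k + 1) (i : ℕ) →
        g.val i j = 0 }

/-- The doubled permutation `σ̃` of `[0, 2N)` attached to `σ ∈ S_N`:
`i ↦ σ i` and `2N - 1 - i ↦ 2N - 1 - σ i` for `i < N`. -/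
def dPerm (N : ℕ) (σ : Equiv.Perm (Fin N)) : Equiv.Perm (Fin (2 * N)) :=
  (Equiv.permCongr (finSumFinEquiv.trans (finCongr (two_mul N).symm)))
    (Equiv.sumCongr σ (Fin.revPerm.trans (σ.trans Fin.revPerm)))

/-- The matrix `j(h₁, h₂)`: for `h₁ = [[A, B], [C, D]]` of size `2a × 2a` (blocks of size
`a × a`) and `h₂` of size `2b × 2b`, the `2(a+b) × 2(a+b)` matrix with `A, B, C, D` in the
four corner `a × a` blocks and `h₂` in the central `2b × 2b` block. -/
def jEmbed (a b : ℕ) (h1 : Matrix (Fin (2 * a)) (Fin (2 * a)) F)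
    (h2 : Matrix (Fin (2 * b)) (Fin (2 * b)) F) :
    Matrix (Fin (2 * (a + b))) (Fin (2 * (a + b))) F := fun x y =>
  if hx : (x : ℕ) < a then
    if hy : (y : ℕ) < a then h1 ⟨(x : ℕ), by omega⟩ ⟨(y : ℕ), by omega⟩
    else if hy2 : a + 2 * b ≤ (y : ℕ) then
      h1 ⟨(x : ℕ), by omega⟩ ⟨(y : ℕ) - 2 * b, by have := y.isLt; omega⟩
    else 0
  else if hx2 : a + 2 * b ≤ (x : ℕ) then
    if hy : (y : ℕ) < a then
      h1 ⟨(x : ℕ) - 2 * b, by have := x.isLt; omega⟩ ⟨(y : ℕ), by omega⟩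
    else if hy2 : a + 2 * b ≤ (y : ℕ) then
      h1 ⟨(x : ℕ) - 2 * b, by have := x.isLt; omega⟩ ⟨(y : ℕ) - 2 * b, by have := y.isLt; omega⟩
    else 0
  else
    if hy : a ≤ (y : ℕ) ∧ (y : ℕ) < a + 2 * b then
      h2 ⟨(x : ℕ) - a, by omega⟩ ⟨(y : ℕ) - a, by omega⟩
    else 0

/-- Upper triangular invertible matrices. -/
def UTSet (M : ℕ) : Set (GL (Fin M) F) :=
  { g | ∀ i j : Fin M, (j : ℕ) < (i : ℕ) → g.val i j = 0 }

/-- The subgroup `H_{a,b} = j(Sp_a × Sp_b)` of `Sp_{a+b}` (as a set). -/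
def HSet (a b : ℕ) : Set (GL (Fin (2 * (a + b))) F) :=
  { g | ∃ h1 : GL (Fin (2 * a)) F, h1 ∈ SpSet F a ∧
        ∃ h2 : GL (Fin (2 * b)) F, h2 ∈ SpSet F b ∧ g.val = jEmbed F a b h1.val h2.val }

/-- The subgroup `P₀^H = j(B_a × B_b)`, `B_c` the upper triangular subgroup of `Sp_c`. -/
def P0HSp (a b : ℕ) : Set (GL (Fin (2 * (a + b))) F) :=
  { g | ∃ h1 : GL (Fin (2 * a)) F, h1 ∈ SpSet F a ∩ UTSet F (2 * a) ∧
        ∃ h2 : GL (Fin (2 * b)) F, h2 ∈ SpSet F b ∩ UTSet F (2 * b) ∧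
          g.val = jEmbed F a b h1.val h2.val }

/-- A monomial matrix: exactly one nonzero entry in each row and in each column. -/
def IsMonomial {M : ℕ} (A : Matrix (Fin M) (Fin M) F) : Prop :=
  (∀ i, ∃! j, A i j ≠ 0) ∧ (∀ j, ∃! i, A i j ≠ 0)

/-- Conjugation `g S g⁻¹` of a set by a group element. -/
def conjSet {M : ℕ} (g : GL (Fin M) F) (S : Set (GL (Fin M) F)) : Set (GL (Fin M) F) :=
  (fun h => g * h * g⁻¹) '' S

/-- Conjugation `σ S σ⁻¹` by the permutation matrix of `σ`. -/
def conjPerm {M : ℕ} (σ : Equiv.Perm (Fin M)) (S : Set (GL (Fin M) F)) :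
    Set (GL (Fin M) F) :=
  { g | ∃ p ∈ S, g.val = (p.val).submatrix σ.symm σ.symm }

def blkPair {k : ℕ} (aT bT : Fin k → ℕ) (x : ℕ) : ℕ :=
  ((Finset.range k).filter (fun j => psum aT (j + 1) + psum bT (j + 1) ≤ x)).card

def isBTab {k : ℕ} (aT bT : Fin k → ℕ) (x : ℕ) : Bool :=
  decide (psum aT (blkPair aT bT x + 1) + psum bT (blkPair aT bT x) ≤ x)

/-- The permutation `σ_T` attached to a table `T = (aT, bT)` (GL recipe). -/
noncomputable def sigmaTab (N : ℕ) {k : ℕ} (aT bT : Fin k → ℕ) : Equiv.Perm (Fin N) :=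
  (Tuple.sort (fun x : Fin N => isBTab aT bT (x : ℕ)))⁻¹


/-!
Let `s j` be the row of the nonzero entry in column `j` of `y`. From `y² = 1`, `s` is an
involution with `y j (s j) * y (s j) j = 1`; as `J` is supported on the antidiagonal,
`ᵗy J y = J` forces `s` to commute with `j ↦ 2N - 1 - j`. Together these make `w = τ𝔠` an
involution. If `i ∈ 𝔠` were fixed by `τ`, `s` would swap `i` and `i' = 2N - 1 - i`, and since
`J` is alternating, `ᵗy J y = J` at `(i, i')` gives `y i' i * y i i' = -1`, so `2 = 0`.
-/

section ColumnSupport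

variable {l m n R : Type*} [Fintype m] [NonUnitalNonAssocSemiring R]

theorem mul_apply_of_col_support {A : Matrix l m R} {B : Matrix m n R} {s : n → m}
    (hB : ∀ k j, B k j ≠ 0 → k = s j) (i : l) (j : n) :
    (A * B) i j = A i (s j) * B (s j) j :=
  (Matrix.mul_apply).trans <| Finset.sum_eq_single (s j)
    (fun k _ hk => by rw [not_ne_iff.mp (mt (hB k j) hk), mul_zero])
    (fun h => absurd (Finset.mem_univ _) h)

theorem transpose_mul_apply_of_col_support {A : Matrix m l R} {B : Matrix m n R} {s : l → m}
    (hA : ∀ k i, A k i ≠ 0 → k = s i) (i : l) (j : n) :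
    (Aᵀ * B) i j = A (s i) i * B (s i) j :=
  (Matrix.mul_apply).trans <| Finset.sum_eq_single (s i)
    (fun k _ hk => by rw [Matrix.transpose_apply, not_ne_iff.mp (mt (hA k i) hk), zero_mul])
    (fun h => absurd (Finset.mem_univ _) h)

end ColumnSupport

section Involution

variable {ι R : Type*} [Fintype ι] [DecidableEq ι] [NonAssocSemiring R]
  {A : Matrix ι ι R} {s : ι → ι}

theorem mul_apply_col_support_eq_one (hA : A * A = 1) (hs : ∀ k j, A k j ≠ 0 → k = s j)
    (j : ι) : A j (s j) * A (s j) j = 1 := by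
  rw [← mul_apply_of_col_support hs, hA, Matrix.one_apply_eq]

theorem col_support_involutive [Nontrivial R] (hA : A * A = 1)
    (hs : ∀ k j, A k j ≠ 0 → k = s j) : Function.Involutive s := fun j =>
  (hs _ _ (left_ne_zero_of_mul_eq_one (mul_apply_col_support_eq_one hA hs j))).symm

end Involution

section Symplectic

variable {F} {N : ℕ}

theorem Jmat_apply_ne_zero_iff {i j : Fin (2 * N)} : Jmat F N i j ≠ 0 ↔ j = i.rev := by
  rw [Fin.ext_iff, Fin.val_rev, Jmat]
  split_ifs <;> simp <;> omega

theorem Jmat_apply_swap (i j : Fin (2 * N)) : Jmat F N j i = -Jmat F N i j := by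
  simp only [Jmat, add_comm (j : ℕ)]
  split_ifs <;> first | (exfalso; omega) | simp

variable {y : Matrix (Fin (2 * N)) (Fin (2 * N)) F} {s : Fin (2 * N) → Fin (2 * N)}

theorem col_support_symplectic (hSp : yᵀ * Jmat F N * y = Jmat F N)
    (hs : ∀ k j, y k j ≠ 0 → k = s j) (i j : Fin (2 * N)) :
    y (s i) i * Jmat F N (s i) (s j) * y (s j) j = Jmat F N i j := by
  rw [← congrFun (congrFun hSp i) j, Matrix.mul_assoc, transpose_mul_apply_of_col_support hs,
    mul_apply_of_col_support hs, mul_assoc]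

theorem col_support_rev (hSp : yᵀ * Jmat F N * y = Jmat F N)
    (hs : ∀ k j, y k j ≠ 0 → k = s j) (j : Fin (2 * N)) : s j.rev = (s j).rev := by
  have hJ : Jmat F N j j.rev ≠ 0 := Jmat_apply_ne_zero_iff.mpr rfl
  rw [← col_support_symplectic hSp hs] at hJ
  exact Jmat_apply_ne_zero_iff.mp (right_ne_zero_of_mul (left_ne_zero_of_mul hJ))

theorem col_support_ne_rev (h2 : (2 : F) ≠ 0) (hSp : yᵀ * Jmat F N * y = Jmat F N)
    (hinv : y * y = 1) (hs : ∀ k j, y k j ≠ 0 → k = s j) (j : Fin (2 * N)) :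
    s j ≠ j.rev := by
  intro hj
  have hjrev : s j.rev = j := by rw [col_support_rev hSp hs, hj, Fin.rev_rev]
  have hsympl := col_support_symplectic hSp hs j j.rev
  have hone := mul_apply_col_support_eq_one hinv hs j
  rw [hj, hjrev, Jmat_apply_swap] at hsympl
  rw [hj] at hone
  have hJ : Jmat F N j j.rev ≠ 0 := Jmat_apply_ne_zero_iff.mpr rfl
  apply h2
  apply mul_right_cancel₀ hJ
  linear_combination -hsympl - Jmat F N j j.rev * hone

end Symplectic

section SignedPermutation

variable {N : ℕ}

def signedIndex (b : Bool) (i : Fin N) : Fin (2 * N) :=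
  bif b then ⟨2 * N - 1 - i, by omega⟩ else ⟨i, by omega⟩

theorem signedIndex_inj {b b' : Bool} {i i' : Fin N} :
    signedIndex b i = signedIndex b' i' ↔ b = b' ∧ i = i' := by
  cases b <;> cases b' <;> simp [signedIndex, Fin.ext_iff] <;> omega

theorem rev_signedIndex (b : Bool) (i : Fin N) : (signedIndex b i).rev = signedIndex (!b) i := by
  cases b <;> simp only [signedIndex, Fin.ext_iff, Fin.val_rev, cond_true, cond_false,
    Bool.not_true, Bool.not_false] <;> omega

theorem signedPerm_involutive_of_involutive {s : Fin (2 * N) → Fin (2 * N)}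
    (hs : Function.Involutive s) (hrev : ∀ j, s j.rev = (s j).rev) (τ : Fin N → Fin N)
    (c : Finset (Fin N)) (hsτ : ∀ i, s (signedIndex false i) = signedIndex (decide (i ∈ c)) (τ i))
    (i : Fin N) : τ (τ i) = i ∧ (i ∈ c ↔ τ i ∈ c) := by
  have hsigned : ∀ b i, s (signedIndex b i) = signedIndex (b ^^ decide (i ∈ c)) (τ i) := by
    rintro (_ | _) i
    · simpa using hsτ i
    · rw [show signedIndex true i = (signedIndex false i).rev from (rev_signedIndex false i).symm,
        hrev, hsτ, rev_signedIndex]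
      simp
  have h := hs (signedIndex false i)
  rw [hsigned, hsigned, signedIndex_inj] at h
  refine ⟨h.2, ?_⟩
  simpa using h.1

end SignedPermutation

theorem stmt8 (h2 : (2 : F) ≠ 0) (N : ℕ)
    (y : GL (Fin (2 * N)) F) (hSp : y ∈ SpSet F N) (hMon : IsMonomial F y.val)
    (hinv : y * y = 1)
    (τ : Equiv.Perm (Fin N)) (c : Finset (Fin N))
    (hw : ∀ (i : Fin N) (row : Fin (2 * N)),
      y.val row (Fin.castLE (by omega) i) ≠ 0 →
        (row : ℕ) = if i ∈ c then 2 * N - 1 - (τ i : ℕ) else (τ i : ℕ)) :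
    (∀ i, τ (τ i) = i) ∧ (∀ i, i ∈ c ↔ τ i ∈ c) ∧ ∀ i ∈ c, τ i ≠ i := by
  have hSp' : y.valᵀ * Jmat F N * y.val = Jmat F N := hSp
  have hinv' : y.val * y.val = 1 := by simpa using congrArg Units.val hinv
  choose s hs_ne hs using hMon.2
  replace hs : ∀ k j, y.val k j ≠ 0 → k = s j := fun k j => hs j k
  have hsτ : ∀ i, s (signedIndex false i) = signedIndex (decide (i ∈ c)) (τ i) := fun i => by
    have hrow := hw i _ (hs_ne (signedIndex false i))
    ext
    by_cases hi : i ∈ c <;> simpa [hi, signedIndex] using hrow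
  have hτc := signedPerm_involutive_of_involutive
    (col_support_involutive hinv' hs) (col_support_rev hSp' hs) τ c hsτ
  refine ⟨fun i => (hτc i).1, fun i => (hτc i).2, fun i hi hfix => ?_⟩
  apply col_support_ne_rev h2 hSp' hinv' hs (signedIndex false i)
  rw [hsτ, hfix, rev_signedIndex]
  simp [hi]

end Stmt8
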